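/- In the graded ring ko_* = Z[η,α,β]/(2η, η³, ηα, α² − 4β), multiplication by β gives an isomorphism of abelian groups from the degree-n component to the degree-(n+8) component, for every n ≥ 0. -/

import Mathlib

/-!
Each `ko_n` is cyclic: using `η³ = ηα = 0` and `α² = 4β`, every monomial of degree `n` is an
integer multiple of `β^k`, `ηβ^k`, `η²β^k`, `αβ^k` or `0`, according as `n = 8k + r` with
`r = 0, 1, 2, 4` or otherwise. Multiplication by `β` sends the generator of `ko_n` to that of
`ko_{n+8}`, so it is surjective, and it is injective because the additive order of the generator
(`∞, 2, 2, ∞` or `1`) depends only on `r`. The orders are detected by the ring maps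
`ko_* → ℤ` (`η, α, β ↦ 0, 2, 1`) and `ko_* → 𝔽₂[x]/(x³)` (`η, α, β ↦ x, 0, 1`).
-/

noncomputable section
open MvPolynomial

def koI : Ideal (MvPolynomial (Fin 3) ℤ) :=
  Ideal.span {2 * X 0, (X 0) ^ 3, X 0 * X 1, (X 1) ^ 2 - 4 * X 2}

abbrev koR := MvPolynomial (Fin 3) ℤ ⧸ koI

def koBeta : koR := Ideal.Quotient.mk koI (X 2)

def koW : Fin 3 → ℕ := ![1, 4, 8]

def koDeg (n : ℕ) : Submodule ℤ koR :=
  Submodule.map (Ideal.Quotient.mkₐ ℤ koI).toLinearMap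
    (MvPolynomial.weightedHomogeneousSubmodule ℤ koW n)

def koEta : koR := Ideal.Quotient.mk koI (X 0)

def koAlpha : koR := Ideal.Quotient.mk koI (X 1)

private lemma mk_eq_zero_of_mem_gens {p : MvPolynomial (Fin 3) ℤ}
    (hp : p ∈ ({2 * X 0, X 0 ^ 3, X 0 * X 1, X 1 ^ 2 - 4 * X 2} : Set _)) :
    Ideal.Quotient.mk koI p = 0 :=
  Ideal.Quotient.eq_zero_iff_mem.2 (Ideal.subset_span hp)

lemma two_mul_koEta : 2 * koEta = 0 := by
  have h := mk_eq_zero_of_mem_gens (p := 2 * X 0) (by simp)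
  rwa [map_mul, map_ofNat] at h

lemma koEta_pow_three : koEta ^ 3 = 0 := by
  have h := mk_eq_zero_of_mem_gens (p := X 0 ^ 3) (by simp)
  rwa [map_pow] at h

lemma koEta_mul_koAlpha : koEta * koAlpha = 0 := by
  have h := mk_eq_zero_of_mem_gens (p := X 0 * X 1) (by simp)
  rwa [map_mul] at h

lemma koAlpha_sq : koAlpha ^ 2 = 4 * koBeta := by
  have h := mk_eq_zero_of_mem_gens (p := X 1 ^ 2 - 4 * X 2) (by simp)
  rwa [map_sub, map_pow, map_mul, map_ofNat, sub_eq_zero] at h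

instance : SetLike.GradedMonoid koDeg where
  one_mem := ⟨1, isWeightedHomogeneous_one ℤ koW, by simp⟩
  mul_mem := by
    rintro i j _ _ ⟨p, hp, rfl⟩ ⟨q, hq, rfl⟩
    exact ⟨p * q, hp.mul hq, by simp⟩

lemma mk_X_mem_koDeg (i : Fin 3) : Ideal.Quotient.mk koI (X i) ∈ koDeg (koW i) :=
  ⟨X i, isWeightedHomogeneous_X ℤ koW i, rfl⟩

lemma koEta_mem_koDeg : koEta ∈ koDeg 1 := mk_X_mem_koDeg 0

lemma koAlpha_mem_koDeg : koAlpha ∈ koDeg 4 := mk_X_mem_koDeg 1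

lemma koBeta_mem_koDeg : koBeta ∈ koDeg 8 := mk_X_mem_koDeg 2

lemma weight_koW (d : Fin 3 →₀ ℕ) : Finsupp.weight koW d = d 0 + 4 * d 1 + 8 * d 2 := by
  simp [Finsupp.weight_apply, Finsupp.sum_fintype, Fin.sum_univ_three, koW, mul_comm]

lemma mk_monomial (d : Fin 3 →₀ ℕ) (r : ℤ) :
    Ideal.Quotient.mk koI (monomial d r) =
      r • (koEta ^ d 0 * koAlpha ^ d 1 * koBeta ^ d 2) := by
  rw [monomial_eq, Finsupp.prod_fintype _ _ (fun _ => pow_zero _), Fin.prod_univ_three]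
  simp [koEta, koAlpha, koBeta, zsmul_eq_mul, mul_assoc]

def koGenLow : ℕ → koR
  | 0 => 1
  | 1 => koEta
  | 2 => koEta ^ 2
  | 4 => koAlpha
  | _ => 0

def koGen (n : ℕ) : koR := koGenLow (n % 8) * koBeta ^ (n / 8)

lemma koGenLow_mem_koDeg (r : ℕ) : koGenLow r ∈ koDeg r := by
  unfold koGenLow
  split
  · exact SetLike.one_mem_graded koDeg
  · exact koEta_mem_koDeg
  · exact SetLike.pow_mem_graded 2 koEta_mem_koDeg
  · exact koAlpha_mem_koDeg
  · exact zero_mem _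

lemma koGen_mem_koDeg (n : ℕ) : koGen n ∈ koDeg n := by
  have h := SetLike.mul_mem_graded (koGenLow_mem_koDeg (n % 8))
    (SetLike.pow_mem_graded (n / 8) koBeta_mem_koDeg)
  rwa [smul_eq_mul, mul_comm, Nat.mod_add_div] at h

lemma koGen_eight_mul_add {r : ℕ} (k : ℕ) (hr : r < 8) :
    koGen (8 * k + r) = koGenLow r * koBeta ^ k := by
  rw [koGen, show (8 * k + r) % 8 = r by omega, show (8 * k + r) / 8 = k by omega]

lemma koGen_add_eight (n : ℕ) : koGen (n + 8) = koBeta * koGen n := by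
  rw [koGen, koGen, Nat.add_mod_right, Nat.add_div_right _ (by norm_num)]
  ring

lemma koAlpha_pow_two_mul (m : ℕ) : koAlpha ^ (2 * m) = 4 ^ m * koBeta ^ m := by
  rw [pow_mul, koAlpha_sq, mul_pow]

lemma koEta_pow_mul_koAlpha_pow_eq_zero {i j : ℕ} (hi : 0 < i) (hj : 0 < j) :
    koEta ^ i * koAlpha ^ j = 0 := by
  obtain ⟨i, rfl⟩ := Nat.exists_eq_add_of_lt hi
  obtain ⟨j, rfl⟩ := Nat.exists_eq_add_of_lt hj
  rw [pow_succ', pow_succ', mul_mul_mul_comm, koEta_mul_koAlpha, zero_mul]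

lemma koMonomial_mem_span_koGen (i j k : ℕ) :
    koEta ^ i * koAlpha ^ j * koBeta ^ k ∈ ℤ ∙ koGen (i + 4 * j + 8 * k) := by
  rw [Submodule.mem_span_singleton]
  obtain rfl | hi := Nat.eq_zero_or_pos i
  · obtain ⟨m, ε, hε, rfl⟩ : ∃ m ε, ε < 2 ∧ j = 2 * m + ε :=
      ⟨j / 2, j % 2, by omega, by omega⟩
    refine ⟨4 ^ m, ?_⟩
    rw [show 0 + 4 * (2 * m + ε) + 8 * k = 8 * (k + m) + 4 * ε by ring,
      koGen_eight_mul_add _ (by omega), pow_add, pow_add, koAlpha_pow_two_mul]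
    interval_cases ε <;> simp [koGenLow, zsmul_eq_mul] <;> ring
  obtain rfl | hj := Nat.eq_zero_or_pos j
  · obtain hi3 | hi3 := Nat.lt_or_ge i 3
    · refine ⟨1, ?_⟩
      rw [show i + 4 * 0 + 8 * k = 8 * k + i by ring, koGen_eight_mul_add _ (by omega)]
      interval_cases i <;> simp [koGenLow]
    · exact ⟨0, by rw [pow_eq_zero_of_le hi3 koEta_pow_three, zero_smul, zero_mul, zero_mul]⟩
  · exact ⟨0, by rw [koEta_pow_mul_koAlpha_pow_eq_zero hi hj, zero_smul, zero_mul]⟩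

lemma koDeg_eq_span_koGen (n : ℕ) : koDeg n = ℤ ∙ koGen n := by
  refine le_antisymm ?_ ((Submodule.span_singleton_le_iff_mem _ _).2 (koGen_mem_koDeg n))
  rintro _ ⟨p, hp, rfl⟩
  induction hp using IsWeightedHomogeneous.induction_on with
  | zero => simp
  | add p q hp hq ihp ihq => simpa using add_mem ihp ihq
  | monomial d r hd =>
    rw [weight_koW] at hd
    simpa [mk_monomial, ← hd] using
      Submodule.smul_mem _ r (koMonomial_mem_span_koGen (d 0) (d 1) (d 2))

section Lift

variable {A : Type*} [CommRing A] (e a b : A)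

def koLift (h2 : 2 * e = 0) (h3 : e ^ 3 = 0) (hea : e * a = 0) (ha : a ^ 2 = 4 * b) :
    koR →+* A :=
  Ideal.Quotient.lift koI (aeval ![e, a, b]).toRingHom fun p hp => by
    refine (show koI ≤ RingHom.ker (aeval ![e, a, b]).toRingHom from ?_) hp
    simp [koI, Ideal.span_le, Set.insert_subset_iff, h2, h3, hea, ha]

variable {e a b} (h2 : 2 * e = 0) (h3 : e ^ 3 = 0) (hea : e * a = 0) (ha : a ^ 2 = 4 * b)

@[simp] lemma koLift_koEta : koLift e a b h2 h3 hea ha koEta = e := by simp [koLift, koEta]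

@[simp] lemma koLift_koAlpha : koLift e a b h2 h3 hea ha koAlpha = a := by
  simp [koLift, koAlpha]

@[simp] lemma koLift_koBeta : koLift e a b h2 h3 hea ha koBeta = b := by simp [koLift, koBeta]

end Lift

def koToInt : koR →+* ℤ := koLift 0 2 1 (by norm_num) (by norm_num) (by norm_num) (by norm_num)

lemma zsmul_eq_zero_iff_of_koToInt_ne_zero {x : koR} (hx : koToInt x ≠ 0) (j : ℤ) :
    j • x = 0 ↔ j = 0 := by
  refine ⟨fun h => ?_, fun hj => by rw [hj, zero_smul]⟩
  have h' := congrArg koToInt h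
  rw [map_zsmul, map_zero, smul_eq_zero] at h'
  exact h'.resolve_right hx

abbrev TruncF2 := AdjoinRoot ((Polynomial.X : Polynomial (ZMod 2)) ^ 3)

lemma TruncF2.two_eq_zero : (2 : TruncF2) = 0 := by
  have h := congrArg (algebraMap (ZMod 2) TruncF2) (show (2 : ZMod 2) = 0 from rfl)
  rwa [map_ofNat, map_zero] at h

lemma TruncF2.root_pow_ne_zero {i : ℕ} (hi : i < 3) :
    (AdjoinRoot.root _ ^ i : TruncF2) ≠ 0 := by
  rw [← AdjoinRoot.mk_X, ← map_pow, Ne, AdjoinRoot.mk_eq_zero,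
    pow_dvd_pow_iff Polynomial.X_ne_zero Polynomial.not_isUnit_X]
  omega

lemma TruncF2.root_pow_three : (AdjoinRoot.root _ ^ 3 : TruncF2) = 0 := by
  rw [← AdjoinRoot.mk_X, ← map_pow, AdjoinRoot.mk_self]

def koToTruncF2 : koR →+* TruncF2 :=
  koLift (AdjoinRoot.root _) 0 1 (by rw [TruncF2.two_eq_zero, zero_mul]) TruncF2.root_pow_three
    (mul_zero _) (by linear_combination -2 * TruncF2.two_eq_zero)

lemma two_dvd_of_zsmul_eq_zero {M : Type*} [AddCommGroup M] [Module (ZMod 2) M] {z : M}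
    (hz : z ≠ 0) {j : ℤ} (h : j • z = 0) : 2 ∣ j := by
  rw [← Int.cast_smul_eq_zsmul (ZMod 2), smul_eq_zero] at h
  exact (ZMod.intCast_zmod_eq_zero_iff_dvd j 2).1 (h.resolve_right hz)

lemma zsmul_eq_zero_iff_of_koToTruncF2_ne_zero {x : koR} (hx : koToTruncF2 x ≠ 0)
    (h2x : 2 * x = 0) (j : ℤ) : j • x = 0 ↔ 2 ∣ j := by
  refine ⟨fun h => two_dvd_of_zsmul_eq_zero hx (by rw [← map_zsmul, h, map_zero]), ?_⟩
  rintro ⟨t, rfl⟩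
  rw [mul_comm, mul_zsmul, two_zsmul, ← two_mul, h2x, smul_zero]

-- `0` encodes infinite order.
def koGenLowOrder : ℕ → ℤ
  | 0 => 0
  | 1 => 2
  | 2 => 2
  | 4 => 0
  | _ => 1

lemma zsmul_koGenLow_mul_koBeta_pow_eq_zero_iff {r : ℕ} (hr : r < 8) (k : ℕ) (j : ℤ) :
    j • (koGenLow r * koBeta ^ k) = 0 ↔ koGenLowOrder r ∣ j := by
  interval_cases r <;> simp only [koGenLow, koGenLowOrder]
  · rw [zero_dvd_iff]
    exact zsmul_eq_zero_iff_of_koToInt_ne_zero (by simp [koToInt]) j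
  · refine zsmul_eq_zero_iff_of_koToTruncF2_ne_zero ?_ ?_ j
    · simpa [koToTruncF2] using TruncF2.root_pow_ne_zero (i := 1) (by norm_num)
    · linear_combination koBeta ^ k * two_mul_koEta
  · refine zsmul_eq_zero_iff_of_koToTruncF2_ne_zero ?_ ?_ j
    · simpa [koToTruncF2] using TruncF2.root_pow_ne_zero (i := 2) (by norm_num)
    · linear_combination koEta * koBeta ^ k * two_mul_koEta
  · simp
  · rw [zero_dvd_iff]
    exact zsmul_eq_zero_iff_of_koToInt_ne_zero (by simp [koToInt]) j
  all_goals simp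

lemma zsmul_koGen_add_eight_eq_zero_iff (n : ℕ) (j : ℤ) :
    j • koGen (n + 8) = 0 ↔ j • koGen n = 0 := by
  obtain ⟨k, r, hr, rfl⟩ : ∃ k r, r < 8 ∧ n = 8 * k + r :=
    ⟨n / 8, n % 8, by omega, by omega⟩
  rw [show 8 * k + r + 8 = 8 * (k + 1) + r by ring, koGen_eight_mul_add _ hr,
    koGen_eight_mul_add _ hr, zsmul_koGenLow_mul_koBeta_pow_eq_zero_iff hr,
    zsmul_koGenLow_mul_koBeta_pow_eq_zero_iff hr]

/-- Multiplication by β maps the degree-`n` component into the degree-`n+8` component,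
is injective there, and hits all of the degree-`n+8` component: i.e. it is an
isomorphism of abelian groups `koDeg n ≃ koDeg (n+8)` for every `n ≥ 0`. -/
theorem ko_beta_periodicity (n : ℕ) :
    (∀ x ∈ koDeg n, koBeta * x ∈ koDeg (n + 8)) ∧
    (∀ x ∈ koDeg n, ∀ y ∈ koDeg n, koBeta * x = koBeta * y → x = y) ∧
    (∀ z ∈ koDeg (n + 8), ∃ x ∈ koDeg n, koBeta * x = z) := by
  refine ⟨fun x hx => ?_, fun x hx y hy hxy => ?_, fun z hz => ?_⟩
  · rw [add_comm]
    exact SetLike.mul_mem_graded koBeta_mem_koDeg hx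
  · rw [koDeg_eq_span_koGen, Submodule.mem_span_singleton] at hx hy
    obtain ⟨k, rfl⟩ := hx
    obtain ⟨l, rfl⟩ := hy
    rw [← sub_eq_zero, ← sub_smul, ← zsmul_koGen_add_eight_eq_zero_iff, sub_smul,
      koGen_add_eight, ← mul_smul_comm, ← mul_smul_comm, hxy, sub_self]
  · rw [koDeg_eq_span_koGen, Submodule.mem_span_singleton] at hz
    obtain ⟨k, rfl⟩ := hz
    refine ⟨k • koGen n, Submodule.smul_mem _ k (koGen_mem_koDeg n), ?_⟩
    rw [mul_smul_comm, koGen_add_eight]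

end
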